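/- arXiv:2512.09102 — 3 statements merged into one kernel-verified Lean document; each statement's English description precedes it below -/
import Mathlib

section
/- Let F be a field of characteristic zero, let V be a nonzero finite-dimensional F-vector space, and let α be a nonzero element of F. Then there do not exist an F-linear endomorphism D of V and an invertible F-linear endomorphism E of V such that D ∘ E - E ∘ D = α • E. -/
/-! Conjugating by `E` turns the relation `D * E - E * D = α • E` into
`E * D * E⁻¹ = D - α • 1`; the trace is invariant under conjugation, so `α * dim V = 0`. -/

theorem Units.mul_mul_inv_eq_sub_smul_one_of_mul_sub_mul_eq_smul {R A : Type*} [CommRing R]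
    [Ring A] [Algebra R A] {D : A} {E : Aˣ} {α : R} (h : D * E - E * D = α • (E : A)) :
    E * D * ↑E⁻¹ = D - α • 1 := by
  have hD : D = E * D * ↑E⁻¹ + α • 1 := by
    calc D = (D * E - E * D + E * D) * ↑E⁻¹ := by simp [mul_assoc]
      _ = E * D * ↑E⁻¹ + α • 1 := by rw [h, add_mul, smul_mul_assoc, Units.mul_inv, add_comm]
  rw [eq_sub_iff_add_eq, ← hD]

theorem LinearMap.mul_finrank_eq_zero_of_mul_sub_mul_eq_smul {R M : Type*} [CommRing R]
    [AddCommGroup M] [Module R M] [Module.Free R M] [Module.Finite R M]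
    {D : Module.End R M} {E : (Module.End R M)ˣ} {α : R}
    (h : D * E - E * D = α • (E : Module.End R M)) :
    α * Module.finrank R M = 0 := by
  have htrace := congrArg (trace R M) (Units.mul_mul_inv_eq_sub_smul_one_of_mul_sub_mul_eq_smul h)
  rw [trace_conj, map_sub, map_smul, trace_one, smul_eq_mul] at htrace
  exact sub_eq_self.mp htrace.symm

/-- Over a field of characteristic zero, on a nonzero
finite-dimensional vector space there is no endomorphism `D` and invertible
endomorphism `E` with `D ∘ E - E ∘ D = α • E` for a nonzero scalar `α`. -/
theorem no_finite_dimensional_exponential_relation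
    (F : Type*) [Field F] [CharZero F]
    (V : Type*) [AddCommGroup V] [Module F V]
    [FiniteDimensional F V] [Nontrivial V]
    (α : F) (hα : α ≠ 0) :
    ¬ ∃ (D : Module.End F V) (E : (Module.End F V)ˣ),
        D * (E : Module.End F V) - (E : Module.End F V) * D
          = α • (E : Module.End F V) := by
  rintro ⟨D, E, h⟩
  have hdim : (Module.finrank F V : F) ≠ 0 := Nat.cast_ne_zero.mpr Module.finrank_pos.ne'
  exact mul_ne_zero hα hdim (LinearMap.mul_finrank_eq_zero_of_mul_sub_mul_eq_smul h)
end

section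
/- Let K/F be a finite Galois extension of fields and let V be an F-vector space. Let each element σ of the Galois group Gal(K/F) act on the tensor product K ⊗[F] V by the F-linear map σ ⊗ id. Then an element z of K ⊗[F] V is fixed by all σ ∈ Gal(K/F) if and only if z lies in the range of the F-linear map V → K ⊗[F] V sending v to 1 ⊗ v. -/
/-!
An `F`-basis of `V` is also a `K`-basis of `K ⊗[F] V`, and in these coordinates `σ ⊗ id` acts
on each coordinate by `σ`, since `σ` is `F`-linear. So `z` is fixed by the Galois group iff each of
its coordinates is, i.e. lies in `F` by the fundamental theorem of Galois theory; and an element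
of `K ⊗[F] V` has all its coordinates in `F` exactly when it is of the form `1 ⊗ v`.
-/

open TensorProduct

namespace Module.Basis

variable {R A B M ι : Type*} [CommSemiring R] [Semiring A] [Semiring B] [Algebra R A] [Algebra R B]
  [AddCommMonoid M] [Module R M] (b : Basis ι R M)

theorem baseChange_repr_rTensor (f : A →ₗ[R] B) (w : A ⊗[R] M) (i : ι) :
    (b.baseChange B).repr (f.rTensor M w) i = f ((b.baseChange A).repr w i) := by
  induction w using TensorProduct.induction_on with
  | zero => simp
  | tmul x y => simp
  | add u v hu hv => simp only [map_add, Finsupp.add_apply, hu, hv]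

theorem mem_range_mk_one_iff (w : A ⊗[R] M) :
    w ∈ LinearMap.range (TensorProduct.mk R A M 1) ↔
      ∀ i, (b.baseChange A).repr w i ∈ Set.range (algebraMap R A) := by
  constructor
  · rintro ⟨v, rfl⟩ i
    exact ⟨b.repr v i, by simp [Algebra.algebraMap_eq_smul_one]⟩
  · intro h
    rw [← (b.baseChange A).linearCombination_repr w, Finsupp.linearCombination_apply]
    refine Submodule.finsuppSum_mem _ _ _ _ fun i _ => ?_
    obtain ⟨d, hd⟩ := h i
    refine ⟨d • b i, ?_⟩
    rw [TensorProduct.mk_apply, tmul_smul, baseChange_apply, ← hd, algebraMap_smul]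

end Module.Basis

/-- Galois descent for vector spaces.  For a finite Galois
extension `K/F` and an `F`-vector space `V`, an element of `K ⊗[F] V` is fixed
by `σ ⊗ id` for every `σ ∈ Gal(K/F)` iff it lies in the range of
`v ↦ 1 ⊗ v`. -/
theorem galois_descent_vector_space
    (F K : Type*) [Field F] [Field K] [Algebra F K]
    [FiniteDimensional F K] [IsGalois F K]
    (V : Type*) [AddCommGroup V] [Module F V]
    (z : K ⊗[F] V) :
    (∀ σ : K ≃ₐ[F] K, LinearMap.rTensor V (σ.toLinearMap) z = z) ↔
      z ∈ LinearMap.range (TensorProduct.mk F K V 1) := by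
  let b := Module.Basis.ofVectorSpace F V
  simp_rw [b.mem_range_mk_one_iff, IsGalois.mem_range_algebraMap_iff_fixed]
  constructor
  · intro h i σ
    rw [← AlgEquiv.toLinearMap_apply, ← b.baseChange_repr_rTensor, h σ]
  · intro h σ
    refine (b.baseChange K).ext_elem fun i => ?_
    rw [b.baseChange_repr_rTensor, AlgEquiv.toLinearMap_apply, h i σ]
end

section
/- Let F be a field and m a natural number. Every F-algebra automorphism φ of the Laurent polynomial ring AddMonoidAlgebra F (Fin m → ℤ) is a monomial automorphism: there exist an additive group automorphism σ of (Fin m → ℤ) and a group homomorphism χ : (Fin m → ℤ) →+ Additive Fˣ such that for every exponent vector a ∈ (Fin m → ℤ) and every c ∈ F, φ(single a c) = single (σ a) (χ(a) · c), where χ(a) is viewed as an element of F. -/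
/-!
Each monomial `X^a = single a 1` is a unit, so `φ (X^a)` is a unit of `F[ℤ^m]`. Over a domain, and
for an exponent group in which any two finite sets, not both singletons, have two distinct pairs
with uniquely attained sums (true for `ℤ^m`), a unit `x` with inverse `y`
must be a monomial: otherwise `x * y` would have two distinct nonzero terms. Writing
`φ (X^a) = χ(a) X^(σ a)`, the identity `φ (X^(a+b)) = φ (X^a) φ (X^b)` makes `σ` and `χ`
homomorphisms, and doing the same for `φ⁻¹` produces an inverse of `σ`.
-/

open Finset

namespace AddMonoidAlgebra

theorem eq_single_of_card_support_eq_one {R A : Type*} [Semiring R] {x : R[A]}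
    (hx : #x.coeff.support = 1) :
    ∃ a r, x = single a r := by
  obtain ⟨a, -, hxa⟩ := Finsupp.card_support_eq_one.mp hx
  exact ⟨a, x.coeff a, coeff_injective hxa⟩

section Units

variable {R A : Type*} [Semiring R] [NoZeroDivisors R]

theorem card_support_mul_card_support_le_one [AddZeroClass A] [TwoUniqueSums A] {x y : R[A]}
    (h : x * y = 1) :
    #x.coeff.support * #y.coeff.support ≤ 1 := by
  classical
  by_contra! hlt
  obtain ⟨p, hp, q, hq, hpq, hpu, hqu⟩ := TwoUniqueSums.uniqueAdd_of_one_lt_card hlt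
  have sum_eq_zero : ∀ p ∈ x.coeff.support ×ˢ y.coeff.support,
      UniqueAdd x.coeff.support y.coeff.support p.1 p.2 → p.1 + p.2 = 0 := by
    intro p hp hu
    rw [mem_product, Finsupp.mem_support_iff, Finsupp.mem_support_iff] at hp
    have hcoeff := coeff_mul_add_of_uniqueAdd hu
    rw [h, one_def, coeff_single, Finsupp.single_apply] at hcoeff
    by_contra hne
    exact mul_ne_zero hp.1 hp.2 (hcoeff ▸ if_neg (Ne.symm hne))
  rw [mem_product] at hq
  obtain ⟨h1, h2⟩ := hpu hq.1 hq.2 ((sum_eq_zero q (mem_product.2 hq) hqu).trans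
    (sum_eq_zero p hp hpu).symm)
  exact hpq (Prod.ext h1 h2).symm

theorem exists_eq_single_of_isUnit [AddMonoid A] [TwoUniqueSums A] {x : R[A]} (hx : IsUnit x) :
    ∃ (a : A) (u : Rˣ), x = single a (u : R) := by
  obtain ⟨⟨x, y, hxy, hyx⟩, rfl⟩ := hx
  rcases subsingleton_or_nontrivial R with hR | hR
  · exact ⟨0, 1, Subsingleton.elim _ _⟩
  have hcard := card_support_mul_card_support_le_one hxy
  have hx0 : x ≠ 0 := by rintro rfl; simp at hxy
  have hy0 : y ≠ 0 := by rintro rfl; simp at hxy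
  have hxs : 0 < #x.coeff.support := by simpa [card_pos] using hx0
  have hys : 0 < #y.coeff.support := by simpa [card_pos] using hy0
  obtain ⟨a, r, rfl⟩ := eq_single_of_card_support_eq_one (by nlinarith : #x.coeff.support = 1)
  obtain ⟨b, s, rfl⟩ := eq_single_of_card_support_eq_one (by nlinarith : #y.coeff.support = 1)
  simp only [single_mul_single, one_def, single_inj, one_ne_zero, and_false, or_false] at hxy hyx
  exact ⟨a, ⟨r, s, hxy.2, hyx.2⟩, rfl⟩

end Units

section AlgHom

variable {k G H : Type*} [CommSemiring k] [NoZeroDivisors k] [Nontrivial k]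

theorem exists_addMonoidHom_map_single_of_algHom [AddGroup G] [AddMonoid H] [TwoUniqueSums H]
    (φ : k[G] →ₐ[k] k[H]) :
    ∃ (σ : G →+ H) (χ : G →+ Additive kˣ), ∀ a c,
      φ (single a c) = single (σ a) (((Additive.toMul (χ a) : kˣ) : k) * c) := by
  have isUnit_single_one (a : G) : IsUnit (single a (1 : k)) :=
    ⟨⟨single a 1, single (-a) 1, by simp [single_mul_single, one_def],
      by simp [single_mul_single, one_def]⟩, rfl⟩
  choose σ χ hσχ using fun a => exists_eq_single_of_isUnit ((isUnit_single_one a).map φ)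
  have map_single (a : G) (c : k) : φ (single a c) = single (σ a) (χ a * c) := by
    have hc : φ (single 0 c) = single 0 c := φ.commutes c
    calc φ (single a c) = φ (single a 1 * single 0 c) := by
          rw [single_mul_single, add_zero, one_mul]
      _ = single (σ a) (χ a * c) := by rw [map_mul, hσχ, hc, single_mul_single, add_zero]
  have map_add (a b : G) : σ (a + b) = σ a + σ b ∧ χ (a + b) = χ a * χ b := by
    have h : φ (single (a + b) 1) = φ (single a 1) * φ (single b 1) := by
      rw [← map_mul, single_mul_single, one_mul]
    rw [hσχ, hσχ, hσχ, single_mul_single, single_inj] at h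
    simpa [Units.ext_iff] using h
  have map_zero : σ 0 = 0 := by
    have h : φ 1 = 1 := map_one φ
    rw [one_def, hσχ, one_def, single_inj] at h
    exact (h.resolve_right (by simp)).1
  exact ⟨⟨⟨σ, map_zero⟩, fun a b => (map_add a b).1⟩,
    AddMonoidHom.mk' (fun a => Additive.ofMul (χ a))
      fun a b => congrArg Additive.ofMul (map_add a b).2,
    map_single⟩

theorem leftInverse_of_map_single [AddMonoid G] [AddMonoid H] {φ : k[G] → k[H]} {ψ : k[H] → k[G]}
    (hψφ : Function.LeftInverse ψ φ) {σ : G → H} {τ : H → G} {χ : G → kˣ} {θ : H → kˣ}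
    (hφ : ∀ a c, φ (single a c) = single (σ a) (χ a * c))
    (hψ : ∀ b c, ψ (single b c) = single (τ b) (θ b * c)) :
    Function.LeftInverse τ σ := by
  intro a
  have h := hψφ (single a 1)
  rw [hφ, hψ, single_inj] at h
  exact (h.resolve_right (by simp)).1

theorem exists_addEquiv_map_single_of_algEquiv [AddGroup G] [AddGroup H] [TwoUniqueSums G]
    [TwoUniqueSums H] (φ : k[G] ≃ₐ[k] k[H]) :
    ∃ (σ : G ≃+ H) (χ : G →+ Additive kˣ), ∀ a c,
      φ (single a c) = single (σ a) (((Additive.toMul (χ a) : kˣ) : k) * c) := by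
  obtain ⟨σ, χ, hφ⟩ := exists_addMonoidHom_map_single_of_algHom (φ : k[G] →ₐ[k] k[H])
  obtain ⟨τ, θ, hψ⟩ := exists_addMonoidHom_map_single_of_algHom (φ.symm : k[H] →ₐ[k] k[G])
  refine ⟨σ.toAddEquiv τ (AddMonoidHom.ext ?_) (AddMonoidHom.ext ?_), χ, hφ⟩
  · exact leftInverse_of_map_single φ.left_inv hφ hψ
  · exact leftInverse_of_map_single φ.right_inv hψ hφ

end AlgHom

end AddMonoidAlgebra

/-- Every `F`-algebra automorphism of the Laurent polynomial ring
`AddMonoidAlgebra F (Fin m → ℤ)` is a monomial automorphism: there are a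
lattice automorphism `σ` of `ℤ^m` and a character `χ : ℤ^m →+ Additive Fˣ`
with `φ (single a c) = single (σ a) (χ(a) • c)` for all `a`, `c`. -/
theorem laurent_automorphism_is_monomial
    (F : Type*) [Field F] (m : ℕ)
    (φ : AddMonoidAlgebra F (Fin m → ℤ) ≃ₐ[F] AddMonoidAlgebra F (Fin m → ℤ)) :
    ∃ (σ : (Fin m → ℤ) ≃+ (Fin m → ℤ)) (χ : (Fin m → ℤ) →+ Additive Fˣ),
      ∀ (a : Fin m → ℤ) (c : F),
        φ (AddMonoidAlgebra.single a c) =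
          AddMonoidAlgebra.single (σ a) (((Additive.toMul (χ a) : Fˣ) : F) * c) :=
  AddMonoidAlgebra.exists_addEquiv_map_single_of_algEquiv φ
end
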